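/- arXiv:1812.03302 — 6 statements merged into one kernel-verified Lean document; each statement's English description precedes it below -/
import Mathlib

section
/- The heterogeneous networked system is controllable (i.e., the pair (Φ, Ψ) is controllable) if and only if for every complex number s, the only row vectors α_1, …, α_N ∈ ℂ^{1×n} satisfying α_i (s·I_n − A_i) − (Σ_{j=1, j≠i}^{N} ω_{ji} α_j)·H·C_i = 0 and δ_i·α_i·B_i = 0 for all i = 1, …, N are α_1 = α_2 = … = α_N = 0. -/
/-! By the PBH test, `(Φ, Ψ)` is controllable iff for every `s` the only row vector `v` with
`v(s·I − Φ) = 0` and `vΨ = 0` is `v = 0`. Split `v = (α₁, …, α_N)` into blocks: the `i`-th block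
column of `s·I − Φ` has diagonal block `s·I − Aᵢ` and off-diagonal blocks `−ω_{ji}·H·Cᵢ` (hence the
transposed weights `ω_{ji}`), and that of `Ψ` is `δᵢ·Bᵢ` in block `i`, so the two conditions on `v`
are exactly the node equations. -/

open Matrix Finset

/-- PBH test: the pair `(M, B)` is controllable iff `[s·I − M, B]` has full row rank
for every `s ∈ ℂ`. -/
def IsControllable {q r : Type*} [Fintype q] [Fintype r] [DecidableEq q]
    (M : Matrix q q ℂ) (B : Matrix q r ℂ) : Prop :=
  ∀ s : ℂ, (Matrix.fromCols (s • (1 : Matrix q q ℂ) - M) B).rank = Fintype.card q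

theorem Matrix.rank_eq_card_iff_forall_vecMul_eq_zero {K m n : Type*} [Field K] [Fintype m]
    [Fintype n] (M : Matrix m n K) :
    M.rank = Fintype.card m ↔ ∀ v : m → K, v ᵥ* M = 0 → v = 0 := by
  rw [M.rank_eq_finrank_span_row, ← Set.finrank, eq_comm,
    ← linearIndependent_iff_card_eq_finrank_span, ← vecMul_injective_iff, ← coe_vecMulLinear,
    injective_iff_map_eq_zero]
  rfl

theorem Matrix.uncurry_vecMul_apply {R ι κ ι' κ' : Type*} [NonUnitalNonAssocSemiring R]
    [Fintype ι] [Fintype κ]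
    (α : ι → κ → R) (M : Matrix (ι × κ) (ι' × κ') R) (i : ι') (y : κ') :
    (Function.uncurry α ᵥ* M) (i, y) = (∑ j, α j ᵥ* M.submatrix (Prod.mk j) (Prod.mk i)) y := by
  simp [vecMul, dotProduct, Fintype.sum_prod_type, Finset.sum_apply]

theorem Matrix.uncurry_vecMul_eq_zero_iff {R ι κ ι' κ' : Type*} [NonUnitalNonAssocSemiring R]
    [Fintype ι] [Fintype κ]
    (α : ι → κ → R) (M : Matrix (ι × κ) (ι' × κ') R) :
    Function.uncurry α ᵥ* M = 0 ↔ ∀ i, ∑ j, α j ᵥ* M.submatrix (Prod.mk j) (Prod.mk i) = 0 := by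
  simp only [funext_iff, Prod.forall, uncurry_vecMul_apply, Pi.zero_apply]

theorem Matrix.sum_vecMul_ite_neg_smul {R ι m n : Type*} [CommRing R] [Fintype ι] [DecidableEq ι]
    [Fintype m]
    (α : ι → m → R) (i : ι) (X Y : Matrix m n R) (c : ι → R) :
    ∑ j, α j ᵥ* (if j = i then X else -(c j • Y)) =
      α i ᵥ* X - (∑ j ∈ univ.erase i, c j • α j) ᵥ* Y := by
  rw [← add_sum_erase _ _ (mem_univ i), if_pos rfl, sum_vecMul, sub_eq_add_neg, ← sum_neg_distrib]
  congr 1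
  refine sum_congr rfl fun j hj => ?_
  rw [if_neg (ne_of_mem_erase hj), vecMul_neg, vecMul_smul, smul_vecMul]

theorem Matrix.sum_vecMul_ite_zero {R ι m n : Type*} [NonUnitalNonAssocSemiring R] [Fintype ι]
    [DecidableEq ι] [Fintype m]
    (α : ι → m → R) (i : ι) (X : Matrix m n R) :
    ∑ j, α j ᵥ* (if j = i then X else 0) = α i ᵥ* X := by
  simp [apply_ite]

theorem isControllable_iff_forall_vecMul {q r : Type*} [Fintype q] [Fintype r] [DecidableEq q]
    (M : Matrix q q ℂ) (B : Matrix q r ℂ) :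
    IsControllable M B ↔ ∀ (s : ℂ) (v : q → ℂ), v ᵥ* (s • 1 - M) = 0 → v ᵥ* B = 0 → v = 0 := by
  simp only [IsControllable, rank_eq_card_iff_forall_vecMul_eq_zero, vecMul_fromCols]
  simp only [← Sum.elim_zero_zero, Sum.elim_eq_iff, and_imp]

theorem stmt0_general (N n m p : ℕ)
    (A : Fin N → Matrix (Fin n) (Fin n) ℝ)
    (B : Fin N → Matrix (Fin n) (Fin p) ℝ)
    (C : Fin N → Matrix (Fin m) (Fin n) ℝ)
    (H : Matrix (Fin n) (Fin m) ℝ)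
    (W : Matrix (Fin N) (Fin N) ℝ)
    (δ : Fin N → ℝ)
    -- the N×N block matrix Φ : (i,i)-block is Aᵢ, (i,j)-block (i≠j) is ω_{ij}·H·C_j
    (Φ : Matrix (Fin N × Fin n) (Fin N × Fin n) ℂ)
    (hΦ : ∀ x y : Fin N × Fin n, Φ x y =
      if x.1 = y.1 then ((A x.1 x.2 y.2 : ℝ) : ℂ)
      else ((W x.1 y.1 : ℝ) : ℂ) *
        ((H.map Complex.ofReal) * (C y.1).map Complex.ofReal) x.2 y.2)
    -- Ψ = blockdiag(δ₁·B₁, …, δ_N·B_N)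
    (Ψ : Matrix (Fin N × Fin n) (Fin N × Fin p) ℂ)
    (hΨ : ∀ (x : Fin N × Fin n) (y : Fin N × Fin p), Ψ x y =
      if x.1 = y.1 then ((δ x.1 : ℝ) : ℂ) * ((B x.1 x.2 y.2 : ℝ) : ℂ) else 0) :
    IsControllable Φ Ψ ↔
      ∀ (s : ℂ) (α : Fin N → (Fin n → ℂ)),
        (∀ i : Fin N,
            α i ᵥ* (s • (1 : Matrix (Fin n) (Fin n) ℂ) - (A i).map Complex.ofReal)
              - (∑ j ∈ Finset.univ.erase i, ((W j i : ℝ) : ℂ) • α j) ᵥ*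
                  ((H.map Complex.ofReal) * (C i).map Complex.ofReal) = 0
          ∧ ((δ i : ℝ) : ℂ) • (α i ᵥ* (B i).map Complex.ofReal) = 0) →
        ∀ i, α i = 0 := by
  rw [isControllable_iff_forall_vecMul]
  refine forall_congr' fun s => ?_
  rw [← (Equiv.curry _ _ ℂ).symm.forall_congr_right]
  refine forall_congr' fun α => ?_
  have hΦ_block : ∀ j i, (s • 1 - Φ).submatrix (Prod.mk j) (Prod.mk i) =
      if j = i then s • 1 - (A i).map Complex.ofReal
      else -(((W j i : ℝ) : ℂ) • ((H.map Complex.ofReal) * (C i).map Complex.ofReal)) := by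
    intro j i
    ext x y
    by_cases hji : j = i <;> simp [hji, hΦ, one_apply]
  have hΨ_block : ∀ j i, Ψ.submatrix (Prod.mk j) (Prod.mk i) =
      if j = i then ((δ i : ℝ) : ℂ) • (B i).map Complex.ofReal else 0 := by
    intro j i
    ext x y
    by_cases hji : j = i <;> simp [hji, hΨ]
  simp only [Equiv.curry, Equiv.coe_fn_symm_mk, uncurry_vecMul_eq_zero_iff, hΦ_block, hΨ_block,
    sum_vecMul_ite_neg_smul, sum_vecMul_ite_zero, vecMul_smul, forall_and, and_imp]
  simp only [funext_iff, Prod.forall, Function.uncurry_apply_pair, Pi.zero_apply]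

/-- Theorem 1: the heterogeneous networked system `(Φ, Ψ)` is controllable
iff for every `s ∈ ℂ` the only row vectors `α₁, …, α_N ∈ ℂ^{1×n}` with
`αᵢ(s·I − Aᵢ) − (∑_{j≠i} ω_{ji} αⱼ)·H·Cᵢ = 0` and `δᵢ·αᵢ·Bᵢ = 0` for all `i`
are `αᵢ = 0` for all `i`. -/
theorem stmt0 (N n m p : ℕ) (hN : 1 ≤ N)
    (A : Fin N → Matrix (Fin n) (Fin n) ℝ)
    (B : Fin N → Matrix (Fin n) (Fin p) ℝ)
    (C : Fin N → Matrix (Fin m) (Fin n) ℝ)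
    (H : Matrix (Fin n) (Fin m) ℝ)
    (W : Matrix (Fin N) (Fin N) ℝ) (hW : ∀ i, W i i = 0)
    (δ : Fin N → ℝ) (hδ : ∀ i, δ i = 0 ∨ δ i = 1)
    -- the N×N block matrix Φ : (i,i)-block is Aᵢ, (i,j)-block (i≠j) is ω_{ij}·H·C_j
    (Φ : Matrix (Fin N × Fin n) (Fin N × Fin n) ℂ)
    (hΦ : ∀ x y : Fin N × Fin n, Φ x y =
      if x.1 = y.1 then ((A x.1 x.2 y.2 : ℝ) : ℂ)
      else ((W x.1 y.1 : ℝ) : ℂ) *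
        ((H.map Complex.ofReal) * (C y.1).map Complex.ofReal) x.2 y.2)
    -- Ψ = blockdiag(δ₁·B₁, …, δ_N·B_N)
    (Ψ : Matrix (Fin N × Fin n) (Fin N × Fin p) ℂ)
    (hΨ : ∀ (x : Fin N × Fin n) (y : Fin N × Fin p), Ψ x y =
      if x.1 = y.1 then ((δ x.1 : ℝ) : ℂ) * ((B x.1 x.2 y.2 : ℝ) : ℂ) else 0) :
    IsControllable Φ Ψ ↔
      ∀ (s : ℂ) (α : Fin N → (Fin n → ℂ)),
        (∀ i : Fin N,
            α i ᵥ* (s • (1 : Matrix (Fin n) (Fin n) ℂ) - (A i).map Complex.ofReal)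
              - (∑ j ∈ Finset.univ.erase i, ((W j i : ℝ) : ℂ) • α j) ᵥ*
                  ((H.map Complex.ofReal) * (C i).map Complex.ofReal) = 0
          ∧ ((δ i : ℝ) : ℂ) • (α i ᵥ* (B i).map Complex.ofReal) = 0) →
        ∀ i, α i = 0 :=
  stmt0_general N n m p A B C H W δ Φ hΦ Ψ hΨ
end

section
/- In the directed chain network, if δ_1 = 1 and δ_2 = δ_3 = … = δ_N = 0 (only the root node is under external control), then the networked system is controllable, i.e., for every s ∈ ℂ the matrix [s·I_{Nn} − Φ, Ψ] has rank Nn. -/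
/-!
A row vector `v` annihilating `[sI - Φ, Ψ]` is a left eigenvector of `Φ` that vanishes on the
single input row (root node, last state). In the chain, each column of `Φ` has exactly one
nonzero entry: column `(j, k+1)` in row `(j, k)` (superdiagonal of `Aⱼ`) and column `(j, 0)`
in row `(j+1, n-1)` (the coupling `ω_{j+1,j} H Cⱼ`). Reading the eigenvector equation
`s v(x) = v(y) Φ(y, x)` at such a column shows that `v(x) = 0` forces `v(y) = 0`, so zeros
propagate from the root through every state of every node in turn; hence `v = 0` and the
matrix has full row rank.
-/

open Matrix

section LeftKernel

variable {K : Type*} [Field K] {m o : Type*} [Fintype m]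

theorem Matrix.rank_eq_card_of_vecMul_eq_zero [Fintype o] {M : Matrix m o K}
    (h : ∀ v, v ᵥ* M = 0 → v = 0) : M.rank = Fintype.card m :=
  (vecMul_injective_iff.mp <| (injective_iff_map_eq_zero M.vecMulLinear).mpr h).rank_matrix

theorem Matrix.eq_zero_of_vecMul_apply_eq_zero {M : Matrix m o K} {v : m → K} {x : o} {y₀ : m}
    (hcol : ∀ y, y ≠ y₀ → M y x = 0) (hy₀ : M y₀ x ≠ 0) (hv : (v ᵥ* M) x = 0) : v y₀ = 0 := by
  have hsingle : (v ᵥ* M) x = v y₀ * M y₀ x :=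
    Finset.sum_eq_single_of_mem y₀ (Finset.mem_univ _) fun y _ hy => by simp [hcol y hy]
  exact (mul_eq_zero.mp (hsingle ▸ hv)).resolve_right hy₀

theorem Matrix.vecMul_fromCols_smul_one_sub_eq_zero_iff [DecidableEq m] {Φ : Matrix m m K}
    {Ψ : Matrix m o K} {s : K} {v : m → K} :
    v ᵥ* fromCols (s • 1 - Φ) Ψ = 0 ↔ v ᵥ* Φ = s • v ∧ v ᵥ* Ψ = 0 := by
  rw [vecMul_fromCols, ← Sum.elim_zero_zero, Sum.elim_eq_iff, vecMul_sub, vecMul_smul,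
    vecMul_one, sub_eq_zero, eq_comm]

end LeftKernel

section ChainNetwork

variable {K : Type*} [Field K]

/-- The paper's `Φ`, with `G j` playing the role of `H Cⱼ`. -/
def networkMatrix {ι κ : Type*} [DecidableEq ι] (A : ι → Matrix κ κ K) (W : Matrix ι ι K)
    (G : ι → Matrix κ κ K) : Matrix (ι × κ) (ι × κ) K :=
  fun x y => if x.1 = y.1 then A x.1 x.2 y.2 else W x.1 y.1 * G y.1 x.2 y.2

variable {N n : ℕ}

/-- Indices are `0`-based: node `i` is the paper's node `i + 1`, state `n - 1` the paper's `n`. -/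
structure IsDirectedChain (A : Fin N → Matrix (Fin n) (Fin n) K) (W : Matrix (Fin N) (Fin N) K)
    (G : Fin N → Matrix (Fin n) (Fin n) K) : Prop where
  nodeMatrix_eq_zero : ∀ i (k l : Fin n), (l : ℕ) ≠ k + 1 → A i k l = 0
  nodeMatrix_ne_zero : ∀ i (k l : Fin n), (l : ℕ) = k + 1 → A i k l ≠ 0
  coupling_eq_zero : ∀ i (k l : Fin n), ¬((k : ℕ) = n - 1 ∧ (l : ℕ) = 0) → G i k l = 0
  coupling_ne_zero : ∀ i (k l : Fin n), (k : ℕ) = n - 1 → (l : ℕ) = 0 → G i k l ≠ 0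
  weight_eq_zero : ∀ i j : Fin N, (i : ℕ) ≠ j + 1 → W i j = 0
  weight_ne_zero : ∀ i j : Fin N, (i : ℕ) = j + 1 → W i j ≠ 0

namespace IsDirectedChain

variable {A : Fin N → Matrix (Fin n) (Fin n) K} {W : Matrix (Fin N) (Fin N) K}
  {G : Fin N → Matrix (Fin n) (Fin n) K} {v : Fin N × Fin n → K} {s : K}

theorem map {L : Type*} [Field L] (hc : IsDirectedChain A W G) (f : K →+* L) :
    IsDirectedChain (fun i => (A i).map f) (W.map f) (fun i => (G i).map f) where
  nodeMatrix_eq_zero i k l h := by simp [hc.nodeMatrix_eq_zero i k l h]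
  nodeMatrix_ne_zero i k l h := by simpa using hc.nodeMatrix_ne_zero i k l h
  coupling_eq_zero i k l h := by simp [hc.coupling_eq_zero i k l h]
  coupling_ne_zero i k l hk hl := by simpa using hc.coupling_ne_zero i k l hk hl
  weight_eq_zero i j h := by simp [hc.weight_eq_zero i j h]
  weight_ne_zero i j h := by simpa using hc.weight_ne_zero i j h

theorem networkMatrix_col_succ (hc : IsDirectedChain A W G) {j : Fin N} {k l : Fin n}
    (hkl : (l : ℕ) = k + 1) : ∀ y, y ≠ (j, k) → networkMatrix A W G y (j, l) = 0 := by
  rintro ⟨i, k'⟩ hy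
  by_cases hij : i = j
  · subst hij
    have hk' : (l : ℕ) ≠ k' + 1 := fun h => hy (by rw [Fin.ext (by omega : (k' : ℕ) = k)])
    simp [networkMatrix, hc.nodeMatrix_eq_zero i k' l hk']
  · simp [networkMatrix, hij, hc.coupling_eq_zero j k' l (by omega)]

theorem networkMatrix_col_zero (hc : IsDirectedChain A W G) {j j' : Fin N} {k l : Fin n}
    (hj : (j' : ℕ) = j + 1) (hk : (k : ℕ) = n - 1) (hl : (l : ℕ) = 0) :
    ∀ y, y ≠ (j', k) → networkMatrix A W G y (j, l) = 0 := by
  rintro ⟨i, k'⟩ hy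
  by_cases hij : i = j
  · subst hij
    simp [networkMatrix, hc.nodeMatrix_eq_zero i k' l (by omega)]
  by_cases hij' : i = j'
  · subst hij'
    have hk' : (k' : ℕ) ≠ n - 1 := fun h => hy (by rw [Fin.ext (h.trans hk.symm)])
    simp [networkMatrix, hij, hc.coupling_eq_zero j k' l (by omega)]
  · have hi : (i : ℕ) ≠ j + 1 := fun h => hij' (Fin.ext (h.trans hj.symm))
    simp [networkMatrix, hij, hc.weight_eq_zero i j hi]

theorem apply_eq_zero_of_succ (hc : IsDirectedChain A W G)
    (hv : v ᵥ* networkMatrix A W G = s • v)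
    {j : Fin N} {k l : Fin n} (hkl : (l : ℕ) = k + 1) (hl : v (j, l) = 0) : v (j, k) = 0 :=
  eq_zero_of_vecMul_apply_eq_zero (hc.networkMatrix_col_succ hkl)
    (by simpa [networkMatrix] using hc.nodeMatrix_ne_zero j k l hkl) (by simp [hv, hl])

theorem apply_eq_zero_of_prev_node (hc : IsDirectedChain A W G)
    (hv : v ᵥ* networkMatrix A W G = s • v)
    {j j' : Fin N} {k l : Fin n} (hj : (j' : ℕ) = j + 1) (hk : (k : ℕ) = n - 1)
    (hl : (l : ℕ) = 0) (h : v (j, l) = 0) : v (j', k) = 0 := by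
  have hjj' : j' ≠ j := fun h => by simp [h] at hj
  refine eq_zero_of_vecMul_apply_eq_zero (hc.networkMatrix_col_zero hj hk hl) ?_ (by simp [hv, h])
  simpa [networkMatrix, hjj'] using
    ⟨hc.weight_ne_zero j' j hj, hc.coupling_ne_zero j k l hk hl⟩

theorem eq_zero_on_node_of_last (hc : IsDirectedChain A W G)
    (hv : v ᵥ* networkMatrix A W G = s • v)
    {j : Fin N} (hlast : ∀ k : Fin n, (k : ℕ) = n - 1 → v (j, k) = 0) (k : Fin n) :
    v (j, k) = 0 := by
  induction hd : n - 1 - k generalizing k with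
  | zero => exact hlast k (by omega)
  | succ d ih =>
    exact hc.apply_eq_zero_of_succ hv (l := ⟨k + 1, by omega⟩) rfl (ih _ (by simp only; omega))

theorem eq_zero_of_vecMul_eq_smul (hc : IsDirectedChain A W G)
    (hv : v ᵥ* networkMatrix A W G = s • v)
    (hroot : ∀ x : Fin N × Fin n, (x.1 : ℕ) = 0 → (x.2 : ℕ) = n - 1 → v x = 0) : v = 0 := by
  suffices ∀ (i : ℕ) (j : Fin N), (j : ℕ) = i → ∀ k, v (j, k) = 0 from
    funext fun x => this _ x.1 rfl x.2
  intro i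
  induction i with
  | zero => exact fun j hj => hc.eq_zero_on_node_of_last hv fun k hk => hroot (j, k) hj hk
  | succ i ih =>
    intro j hj
    exact hc.eq_zero_on_node_of_last hv fun k hk =>
      hc.apply_eq_zero_of_prev_node hv (j := ⟨i, by omega⟩) (l := ⟨0, k.pos⟩) hj hk rfl (ih _ rfl _)

end IsDirectedChain

end ChainNetwork

theorem stmt1_general (N n : ℕ) (hN : 0 < N)
    (A : Fin N → Matrix (Fin n) (Fin n) ℝ)
    (B : Fin N → Matrix (Fin n) (Fin 1) ℝ)
    (C : Fin N → Matrix (Fin 1) (Fin n) ℝ)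
    (H : Matrix (Fin n) (Fin 1) ℝ)
    (W : Matrix (Fin N) (Fin N) ℝ)
    (δ : Fin N → ℝ)
    -- each Aᵢ is superdiagonal with nonzero superdiagonal entries a_{i,k}
    (hA0 : ∀ (i : Fin N) (k l : Fin n), (l : ℕ) ≠ (k : ℕ) + 1 → A i k l = 0)
    (hA1 : ∀ (i : Fin N) (k l : Fin n), (l : ℕ) = (k : ℕ) + 1 → A i k l ≠ 0)
    -- each H·Cᵢ has its only nonzero entry h_{i,1} ≠ 0 at the bottom-left position
    (hHC0 : ∀ (i : Fin N) (k l : Fin n), ¬((k : ℕ) = n - 1 ∧ (l : ℕ) = 0) →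
      (H * C i) k l = 0)
    (hHC1 : ∀ (i : Fin N) (k l : Fin n), (k : ℕ) = n - 1 → (l : ℕ) = 0 →
      (H * C i) k l ≠ 0)
    -- Bᵢ = eₙ, the n-th standard basis column vector
    (hB : ∀ (i : Fin N) (k : Fin n) (l : Fin 1),
      B i k l = if (k : ℕ) = n - 1 then 1 else 0)
    -- chain topology rooted at node 1: ω_{i+1,i} ≠ 0, all other entries zero
    (hW0 : ∀ i j : Fin N, (i : ℕ) ≠ (j : ℕ) + 1 → W i j = 0)
    (hW1 : ∀ (j : Fin N) (h : (j : ℕ) + 1 < N), W ⟨(j : ℕ) + 1, h⟩ j ≠ 0)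
    -- only the root node is under external control
    (hδ1 : δ ⟨0, hN⟩ = 1)
    -- the N×N block matrix Φ and the block diagonal input matrix Ψ
    (Φ : Matrix (Fin N × Fin n) (Fin N × Fin n) ℂ)
    (hΦ : ∀ x y : Fin N × Fin n, Φ x y =
      if x.1 = y.1 then ((A x.1 x.2 y.2 : ℝ) : ℂ)
      else ((W x.1 y.1 : ℝ) : ℂ) *
        ((H.map Complex.ofReal) * (C y.1).map Complex.ofReal) x.2 y.2)
    (Ψ : Matrix (Fin N × Fin n) (Fin N × Fin 1) ℂ)
    (hΨ : ∀ (x : Fin N × Fin n) (y : Fin N × Fin 1), Ψ x y =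
      if x.1 = y.1 then ((δ x.1 : ℝ) : ℂ) * ((B x.1 x.2 y.2 : ℝ) : ℂ) else 0) :
    ∀ s : ℂ,
      (Matrix.fromCols (s • (1 : Matrix (Fin N × Fin n) (Fin N × Fin n) ℂ) - Φ) Ψ).rank
        = N * n := by
  intro s
  have hchain : IsDirectedChain A W (fun j => H * C j) :=
    ⟨hA0, hA1, hHC0, hHC1, hW0, fun ⟨i, hi⟩ j h => by subst h; exact hW1 j hi⟩
  have hΦ_eq : Φ = networkMatrix (fun i => (A i).map Complex.ofRealHom)
      (W.map Complex.ofRealHom) (fun j => (H * C j).map Complex.ofRealHom) := by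
    ext x y
    simp [hΦ, networkMatrix, Matrix.mul_apply]
  have hΨ_root : ∀ k : Fin n, (k : ℕ) = n - 1 →
      ∀ y, y ≠ (⟨0, hN⟩, k) → Ψ y (⟨0, hN⟩, 0) = 0 := by
    rintro k hk ⟨i, k'⟩ hy
    by_cases hi : i = ⟨0, hN⟩
    · subst hi
      have hk' : (k' : ℕ) ≠ n - 1 := fun h => hy (by rw [Fin.ext (h.trans hk.symm)])
      simp [hΨ, hB, hk']
    · simp [hΨ, hi]
  refine (rank_eq_card_of_vecMul_eq_zero fun v hv => ?_).trans (by simp)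
  obtain ⟨hΦv, hΨv⟩ := vecMul_fromCols_smul_one_sub_eq_zero_iff.mp hv
  refine (hchain.map Complex.ofRealHom).eq_zero_of_vecMul_eq_smul (hΦ_eq ▸ hΦv) ?_
  rintro ⟨i, k⟩ (hi : (i : ℕ) = 0) (hk : (k : ℕ) = n - 1)
  obtain rfl : i = ⟨0, hN⟩ := Fin.ext hi
  exact eq_zero_of_vecMul_apply_eq_zero (hΨ_root k hk) (by simp [hΨ, hB, hk, hδ1])
    (congrFun hΨv _)

/-- Corollary 1, sufficiency: in the directed chain network rooted at
node 1 (index 0), with superdiagonal node matrices `Aᵢ`, products `H·Cᵢ` whose only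
nonzero entry is the bottom-left one, and `Bᵢ = eₙ`, if only the root node is under
external control (`δ₁ = 1`, `δᵢ = 0` otherwise), then the networked system is
controllable: for every `s ∈ ℂ`, `[s·I_{Nn} − Φ, Ψ]` has rank `N·n`. -/
theorem stmt1 (N n : ℕ) (hN : 0 < N) (hn : 0 < n)
    (A : Fin N → Matrix (Fin n) (Fin n) ℝ)
    (B : Fin N → Matrix (Fin n) (Fin 1) ℝ)
    (C : Fin N → Matrix (Fin 1) (Fin n) ℝ)
    (H : Matrix (Fin n) (Fin 1) ℝ)
    (W : Matrix (Fin N) (Fin N) ℝ)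
    (δ : Fin N → ℝ)
    -- each Aᵢ is superdiagonal with nonzero superdiagonal entries a_{i,k}
    (hA0 : ∀ (i : Fin N) (k l : Fin n), (l : ℕ) ≠ (k : ℕ) + 1 → A i k l = 0)
    (hA1 : ∀ (i : Fin N) (k l : Fin n), (l : ℕ) = (k : ℕ) + 1 → A i k l ≠ 0)
    -- each H·Cᵢ has its only nonzero entry h_{i,1} ≠ 0 at the bottom-left position
    (hHC0 : ∀ (i : Fin N) (k l : Fin n), ¬((k : ℕ) = n - 1 ∧ (l : ℕ) = 0) →
      (H * C i) k l = 0)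
    (hHC1 : ∀ (i : Fin N) (k l : Fin n), (k : ℕ) = n - 1 → (l : ℕ) = 0 →
      (H * C i) k l ≠ 0)
    -- Bᵢ = eₙ, the n-th standard basis column vector
    (hB : ∀ (i : Fin N) (k : Fin n) (l : Fin 1),
      B i k l = if (k : ℕ) = n - 1 then 1 else 0)
    -- chain topology rooted at node 1: ω_{i+1,i} ≠ 0, all other entries zero
    (hW0 : ∀ i j : Fin N, (i : ℕ) ≠ (j : ℕ) + 1 → W i j = 0)
    (hW1 : ∀ (j : Fin N) (h : (j : ℕ) + 1 < N), W ⟨(j : ℕ) + 1, h⟩ j ≠ 0)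
    -- only the root node is under external control
    (hδ1 : δ ⟨0, hN⟩ = 1)
    (hδ0 : ∀ i : Fin N, (i : ℕ) ≠ 0 → δ i = 0)
    -- the N×N block matrix Φ and the block diagonal input matrix Ψ
    (Φ : Matrix (Fin N × Fin n) (Fin N × Fin n) ℂ)
    (hΦ : ∀ x y : Fin N × Fin n, Φ x y =
      if x.1 = y.1 then ((A x.1 x.2 y.2 : ℝ) : ℂ)
      else ((W x.1 y.1 : ℝ) : ℂ) *
        ((H.map Complex.ofReal) * (C y.1).map Complex.ofReal) x.2 y.2)
    (Ψ : Matrix (Fin N × Fin n) (Fin N × Fin 1) ℂ)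
    (hΨ : ∀ (x : Fin N × Fin n) (y : Fin N × Fin 1), Ψ x y =
      if x.1 = y.1 then ((δ x.1 : ℝ) : ℂ) * ((B x.1 x.2 y.2 : ℝ) : ℂ) else 0) :
    ∀ s : ℂ,
      (Matrix.fromCols (s • (1 : Matrix (Fin N × Fin n) (Fin N × Fin n) ℂ) - Φ) Ψ).rank
        = N * n :=
  stmt1_general N n hN A B C H W δ hA0 hA1 hHC0 hHC1 hB hW0 hW1 hδ1 Φ hΦ Ψ hΨ
end

section
/- In the directed chain network, if the root node is not under external control, i.e., δ_1 = 0 (regardless of the values of δ_2, …, δ_N), then the networked system is not controllable: there exists s ∈ ℂ such that [s·I_{Nn} − Φ, Ψ] has rank strictly less than Nn. -/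
open Matrix Finset

/-
Take `s = 0`. The last state of the root node has no dynamics of its own (the last row of the
superdiagonal `Aᵢ` vanishes), receives no coupling (nothing points to the root of the
chain) and no input (`δ₁ = 0`). Hence the corresponding row of `[-Φ, Ψ]` is zero and the rank
drops below `N·n`.
-/

theorem Matrix.rank_lt_card_height_of_row_eq_zero {m n R : Type*} [Fintype m] [Fintype n]
    [DecidableEq m] [CommSemiring R] [StrongRankCondition R] (A : Matrix m n R) {i : m}
    (hi : A.row i = 0) :
    A.rank < Fintype.card m :=
  calc A.rank ≤ (univ.erase i).card :=
        A.rank_le_card_of_support_subset _ fun j hj =>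
          mem_coe.2 <| mem_erase.2 ⟨fun hji => hj (hji ▸ hi), mem_univ j⟩
    _ < Fintype.card m := card_erase_lt_of_mem (mem_univ i)

theorem stmt2_general (N n : ℕ) (hN : 0 < N) (hn : 0 < n)
    (A : Fin N → Matrix (Fin n) (Fin n) ℝ)
    (B : Fin N → Matrix (Fin n) (Fin 1) ℝ)
    (C : Fin N → Matrix (Fin 1) (Fin n) ℝ)
    (H : Matrix (Fin n) (Fin 1) ℝ)
    (W : Matrix (Fin N) (Fin N) ℝ)
    (δ : Fin N → ℝ)
    -- each Aᵢ is superdiagonal with nonzero superdiagonal entries a_{i,k}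
    (hA0 : ∀ (i : Fin N) (k l : Fin n), (l : ℕ) ≠ (k : ℕ) + 1 → A i k l = 0)
    -- chain topology rooted at node 1: ω_{i+1,i} ≠ 0, all other entries zero
    (hW0 : ∀ i j : Fin N, (i : ℕ) ≠ (j : ℕ) + 1 → W i j = 0)
    -- the root node is not under external control; δᵢ ∈ {0,1} otherwise arbitrary
    (hδroot : δ ⟨0, hN⟩ = 0)
    -- the N×N block matrix Φ and the block diagonal input matrix Ψ
    (Φ : Matrix (Fin N × Fin n) (Fin N × Fin n) ℂ)
    (hΦ : ∀ x y : Fin N × Fin n, Φ x y =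
      if x.1 = y.1 then ((A x.1 x.2 y.2 : ℝ) : ℂ)
      else ((W x.1 y.1 : ℝ) : ℂ) *
        ((H.map Complex.ofReal) * (C y.1).map Complex.ofReal) x.2 y.2)
    (Ψ : Matrix (Fin N × Fin n) (Fin N × Fin 1) ℂ)
    (hΨ : ∀ (x : Fin N × Fin n) (y : Fin N × Fin 1), Ψ x y =
      if x.1 = y.1 then ((δ x.1 : ℝ) : ℂ) * ((B x.1 x.2 y.2 : ℝ) : ℂ) else 0) :
    ∃ s : ℂ,
      (Matrix.fromCols (s • (1 : Matrix (Fin N × Fin n) (Fin N × Fin n) ℂ) - Φ) Ψ).rank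
        < N * n := by
  let root_last : Fin N × Fin n := (⟨0, hN⟩, ⟨n - 1, Nat.sub_lt hn one_pos⟩)
  have hΦ_row : ∀ y, Φ root_last y = 0 := by
    intro y
    rw [hΦ]
    split_ifs
    · rw [hA0 _ _ _ (by simp [root_last]; omega), Complex.ofReal_zero]
    · rw [hW0 _ _ (by simp [root_last]), Complex.ofReal_zero, zero_mul]
  have hΨ_row : ∀ y, Ψ root_last y = 0 := by
    intro y
    rw [hΨ]
    split_ifs
    · rw [show root_last.1 = ⟨0, hN⟩ from rfl, hδroot, Complex.ofReal_zero, zero_mul]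
    · rfl
  refine ⟨0, ?_⟩
  have hrow : (fromCols ((0 : ℂ) • 1 - Φ) Ψ).row root_last = 0 := by
    ext (y | y)
    · simp [hΦ_row]
    · simp [hΨ_row]
  simpa using rank_lt_card_height_of_row_eq_zero _ hrow

/-- Corollary 1, necessity: in the directed chain network rooted at
node 1 (index 0), if the root node is not under external control (`δ₁ = 0`,
regardless of the other `δᵢ`), then the networked system is not controllable:
there exists `s ∈ ℂ` such that `[s·I_{Nn} − Φ, Ψ]` has rank strictly less than `N·n`. -/
theorem stmt2 (N n : ℕ) (hN : 0 < N) (hn : 0 < n)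
    (A : Fin N → Matrix (Fin n) (Fin n) ℝ)
    (B : Fin N → Matrix (Fin n) (Fin 1) ℝ)
    (C : Fin N → Matrix (Fin 1) (Fin n) ℝ)
    (H : Matrix (Fin n) (Fin 1) ℝ)
    (W : Matrix (Fin N) (Fin N) ℝ)
    (δ : Fin N → ℝ)
    -- each Aᵢ is superdiagonal with nonzero superdiagonal entries a_{i,k}
    (hA0 : ∀ (i : Fin N) (k l : Fin n), (l : ℕ) ≠ (k : ℕ) + 1 → A i k l = 0)
    (hA1 : ∀ (i : Fin N) (k l : Fin n), (l : ℕ) = (k : ℕ) + 1 → A i k l ≠ 0)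
    -- each H·Cᵢ has its only nonzero entry h_{i,1} ≠ 0 at the bottom-left position
    (hHC0 : ∀ (i : Fin N) (k l : Fin n), ¬((k : ℕ) = n - 1 ∧ (l : ℕ) = 0) →
      (H * C i) k l = 0)
    (hHC1 : ∀ (i : Fin N) (k l : Fin n), (k : ℕ) = n - 1 → (l : ℕ) = 0 →
      (H * C i) k l ≠ 0)
    -- Bᵢ = eₙ, the n-th standard basis column vector
    (hB : ∀ (i : Fin N) (k : Fin n) (l : Fin 1),
      B i k l = if (k : ℕ) = n - 1 then 1 else 0)
    -- chain topology rooted at node 1: ω_{i+1,i} ≠ 0, all other entries zero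
    (hW0 : ∀ i j : Fin N, (i : ℕ) ≠ (j : ℕ) + 1 → W i j = 0)
    (hW1 : ∀ (j : Fin N) (h : (j : ℕ) + 1 < N), W ⟨(j : ℕ) + 1, h⟩ j ≠ 0)
    -- the root node is not under external control; δᵢ ∈ {0,1} otherwise arbitrary
    (hδroot : δ ⟨0, hN⟩ = 0)
    (hδ : ∀ i : Fin N, δ i = 0 ∨ δ i = 1)
    -- the N×N block matrix Φ and the block diagonal input matrix Ψ
    (Φ : Matrix (Fin N × Fin n) (Fin N × Fin n) ℂ)
    (hΦ : ∀ x y : Fin N × Fin n, Φ x y =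
      if x.1 = y.1 then ((A x.1 x.2 y.2 : ℝ) : ℂ)
      else ((W x.1 y.1 : ℝ) : ℂ) *
        ((H.map Complex.ofReal) * (C y.1).map Complex.ofReal) x.2 y.2)
    (Ψ : Matrix (Fin N × Fin n) (Fin N × Fin 1) ℂ)
    (hΨ : ∀ (x : Fin N × Fin n) (y : Fin N × Fin 1), Ψ x y =
      if x.1 = y.1 then ((δ x.1 : ℝ) : ℂ) * ((B x.1 x.2 y.2 : ℝ) : ℂ) else 0) :
    ∃ s : ℂ,
      (Matrix.fromCols (s • (1 : Matrix (Fin N × Fin n) (Fin N × Fin n) ℂ) - Φ) Ψ).rank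
        < N * n :=
  stmt2_general N n hN hn A B C H W δ hA0 hW0 hδroot Φ hΦ Ψ hΨ
end

section
/- Suppose node i has no external control input, i.e., δ_i = 0. If the networked system (Φ, Ψ) is controllable, then for every complex number s, the n×(Nn) block matrix [−ω_{i1}·H·C_1, −ω_{i2}·H·C_2, …, s·I_n − A_i, …, −ω_{iN}·H·C_N] (whose j-th n×n block is −ω_{ij}·H·C_j for j ≠ i and s·I_n − A_i for j = i) has full row rank n. -/
/-
If `δᵢ = 0`, the `n` rows of the PBH matrix `[s·I − Φ, Ψ]` belonging to node `i` are exactly the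
rows of `[R, 0]`, where `R` is the block row in question. Full row rank of the PBH matrix makes
all its rows linearly independent, in particular these `n` rows, so `R` has rank `n`.
-/

open Matrix Finset

namespace Matrix

variable {K m m₀ n n₁ : Type*}

theorem linearIndependent_row_of_rank_eq_card [Field K] [Fintype m] [Fintype n]
    {M : Matrix m n K} (h : M.rank = Fintype.card m) : LinearIndependent K M.row := by
  rw [linearIndependent_iff_card_eq_finrank_span, Set.finrank, ← M.rank_eq_finrank_span_row, h]

theorem rank_submatrix_eq_card_of_rank_eq_card [Field K] [Fintype m] [Fintype m₀] [Fintype n]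
    {M : Matrix m n K} (h : M.rank = Fintype.card m) {e : m₀ → m} (he : Function.Injective e) :
    (M.submatrix e id).rank = Fintype.card m₀ :=
  ((linearIndependent_row_of_rank_eq_card h).comp e he).rank_matrix

theorem rank_fromCols_zero_right [CommRing K] [StrongRankCondition K] [Fintype n] [Fintype n₁]
    [DecidableEq n] (A : Matrix m n K) : (fromCols A (0 : Matrix m n₁ K)).rank = A.rank := by
  have hright : fromCols A (0 : Matrix m n₁ K) = A * fromCols (1 : Matrix n n K) 0 := by
    rw [mul_fromCols, Matrix.mul_one, Matrix.mul_zero]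
  have hleft : fromCols A (0 : Matrix m n₁ K) * fromRows (1 : Matrix n n K) 0 = A :=
    (fromCols_mul_fromRows A 0 1 0).trans (by simp)
  refine le_antisymm ?_ ?_
  · rw [hright]
    exact rank_mul_le_left _ _
  · conv_lhs => rw [← hleft]
    exact rank_mul_le_left _ _

end Matrix

theorem stmt4_general (N n m p : ℕ)
    (A : Fin N → Matrix (Fin n) (Fin n) ℝ)
    (B : Fin N → Matrix (Fin n) (Fin p) ℝ)
    (C : Fin N → Matrix (Fin m) (Fin n) ℝ)
    (H : Matrix (Fin n) (Fin m) ℝ)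
    (W : Matrix (Fin N) (Fin N) ℝ)
    (δ : Fin N → ℝ)
    (Φ : Matrix (Fin N × Fin n) (Fin N × Fin n) ℂ)
    (hΦ : ∀ x y : Fin N × Fin n, Φ x y =
      if x.1 = y.1 then ((A x.1 x.2 y.2 : ℝ) : ℂ)
      else ((W x.1 y.1 : ℝ) : ℂ) *
        ((H.map Complex.ofReal) * (C y.1).map Complex.ofReal) x.2 y.2)
    (Ψ : Matrix (Fin N × Fin n) (Fin N × Fin p) ℂ)
    (hΨ : ∀ (x : Fin N × Fin n) (y : Fin N × Fin p), Ψ x y =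
      if x.1 = y.1 then ((δ x.1 : ℝ) : ℂ) * ((B x.1 x.2 y.2 : ℝ) : ℂ) else 0)
    -- node i has no external control input
    (i : Fin N) (hi : δ i = 0)
    -- the networked system is controllable
    (hctrb : IsControllable Φ Ψ) :
    ∀ (s : ℂ) (R : Matrix (Fin n) (Fin N × Fin n) ℂ),
      (∀ (k : Fin n) (y : Fin N × Fin n), R k y =
        if y.1 = i then (s • (1 : Matrix (Fin n) (Fin n) ℂ) - (A i).map Complex.ofReal) k y.2
        else (-((W i y.1 : ℝ) : ℂ)) *
          ((H.map Complex.ofReal) * (C y.1).map Complex.ofReal) k y.2) →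
      R.rank = n := by
  intro s R hR
  have hblock : (fromCols (s • 1 - Φ) Ψ).submatrix (Prod.mk i) id =
      fromCols R (0 : Matrix (Fin n) (Fin N × Fin p) ℂ) := by
    ext k (⟨j, l⟩ | ⟨j, l⟩)
    · by_cases hj : j = i
      · subst hj
        simp [hΦ, hR, one_apply]
      · simp [hΦ, hR, Ne.symm hj, hj]
    · simp [hΨ, hi]
  have hrank := rank_submatrix_eq_card_of_rank_eq_card (hctrb s) (Prod.mk_right_injective i)
  rwa [hblock, rank_fromCols_zero_right, Fintype.card_fin] at hrank

/-- Theorem 2: if node `i` has no external control input (`δᵢ = 0`) and the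
networked system `(Φ, Ψ)` is controllable, then for every `s ∈ ℂ` the `n×(Nn)` block matrix
`[−ω_{i1}·H·C₁, …, s·I − Aᵢ, …, −ω_{iN}·H·C_N]` has full row rank `n`. -/
theorem stmt4 (N n m p : ℕ) (hN : 1 ≤ N)
    (A : Fin N → Matrix (Fin n) (Fin n) ℝ)
    (B : Fin N → Matrix (Fin n) (Fin p) ℝ)
    (C : Fin N → Matrix (Fin m) (Fin n) ℝ)
    (H : Matrix (Fin n) (Fin m) ℝ)
    (W : Matrix (Fin N) (Fin N) ℝ) (hW : ∀ i, W i i = 0)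
    (δ : Fin N → ℝ) (hδ : ∀ i, δ i = 0 ∨ δ i = 1)
    (Φ : Matrix (Fin N × Fin n) (Fin N × Fin n) ℂ)
    (hΦ : ∀ x y : Fin N × Fin n, Φ x y =
      if x.1 = y.1 then ((A x.1 x.2 y.2 : ℝ) : ℂ)
      else ((W x.1 y.1 : ℝ) : ℂ) *
        ((H.map Complex.ofReal) * (C y.1).map Complex.ofReal) x.2 y.2)
    (Ψ : Matrix (Fin N × Fin n) (Fin N × Fin p) ℂ)
    (hΨ : ∀ (x : Fin N × Fin n) (y : Fin N × Fin p), Ψ x y =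
      if x.1 = y.1 then ((δ x.1 : ℝ) : ℂ) * ((B x.1 x.2 y.2 : ℝ) : ℂ) else 0)
    -- node i has no external control input
    (i : Fin N) (hi : δ i = 0)
    -- the networked system is controllable
    (hctrb : IsControllable Φ Ψ) :
    ∀ (s : ℂ) (R : Matrix (Fin n) (Fin N × Fin n) ℂ),
      (∀ (k : Fin n) (y : Fin N × Fin n), R k y =
        if y.1 = i then (s • (1 : Matrix (Fin n) (Fin n) ℂ) - (A i).map Complex.ofReal) k y.2
        else (-((W i y.1 : ℝ) : ℂ)) *
          ((H.map Complex.ofReal) * (C y.1).map Complex.ofReal) k y.2) →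
      R.rank = n :=
  stmt4_general N n m p A B C H W δ Φ hΦ Ψ hΨ i hi hctrb
end

section
/- Let ξ = (ξ_1,…,ξ_N) ∈ ℂ^N be a left eigenvector of W associated with eigenvalue s_0, i.e., ξᵀ W = s_0 ξᵀ, and suppose ξᵀ Δ = 0 (equivalently ξ_i δ_i = 0 for all i) and that there is a matrix M ∈ ℂ^{n×n} with A_i + s_0·H·C_i = M for every i = 1,…,N. Then for any differentiable functions x_1,…,x_N : ℝ → ℂ^n and any functions u_1,…,u_N : ℝ → ℝ^p satisfying the network dynamics ẋ_i(t) = A_i x_i(t) + Σ_{j=1}^{N} ω_{ij}·H·C_j x_j(t) + δ_i B_i u_i(t) for all t and all i, the function z(t) := Σ_{i=1}^{N} ξ_i x_i(t) satisfies the autonomous linear equation ż(t) = M z(t) for all t. -/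
/-! Differentiate `z = ∑ ξᵢ xᵢ` termwise. Since `ξᵀW = s₀ξᵀ`, exchanging the double sum turns
the coupling term into `∑ᵢ s₀ ξᵢ H Cᵢ xᵢ`; the inputs drop out because `ξᵢδᵢ = 0`; and
`Aᵢ + s₀ H Cᵢ = M` then collects everything into `M z`. -/

open Matrix Finset

section LeftEigenvector

variable {R ι κ : Type*} [CommRing R] [Fintype ι] [Fintype κ]

theorem sum_smul_sum_smul_eq_of_vecMul_eq_smul {E : Type*} [AddCommGroup E] [Module R E]
    {W : Matrix ι ι R} {ξ : ι → R} {s : R} (hξ : ξ ᵥ* W = s • ξ) (v : ι → E) :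
    ∑ i, ξ i • ∑ j, W i j • v j = s • ∑ j, ξ j • v j := by
  have hcol (j : ι) : ∑ i, ξ i * W i j = s * ξ j := congrFun hξ j
  simp only [Finset.smul_sum, smul_smul]
  rw [Finset.sum_comm]
  refine Finset.sum_congr rfl fun j _ => ?_
  rw [← Finset.sum_smul, hcol, mul_smul]

theorem sum_smul_network_eq_mulVec_sum_smul
    {W : Matrix ι ι R} {ξ : ι → R} {s : R} (hξ : ξ ᵥ* W = s • ξ)
    {d : ι → R} (hξd : ∀ i, ξ i * d i = 0)
    {A K : ι → Matrix κ κ R} {M : Matrix κ κ R} (hM : ∀ i, A i + s • K i = M)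
    (y b : ι → κ → R) :
    ∑ i, ξ i • (A i *ᵥ y i + ∑ j, W i j • (K j *ᵥ y j) + d i • b i)
      = M *ᵥ ∑ i, ξ i • y i := by
  have hinput (i : ι) : ξ i • d i • b i = 0 := by rw [smul_smul, hξd i, zero_smul]
  have hlocal (i : ι) : ξ i • (A i *ᵥ y i) + (s * ξ i) • (K i *ᵥ y i) = ξ i • (M *ᵥ y i) := by
    rw [← hM i, add_mulVec, smul_mulVec, smul_add, smul_smul, mul_comm]
  calc ∑ i, ξ i • (A i *ᵥ y i + ∑ j, W i j • (K j *ᵥ y j) + d i • b i)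
      = ∑ i, ξ i • (A i *ᵥ y i) + ∑ i, ξ i • ∑ j, W i j • (K j *ᵥ y j) := by
        simp only [smul_add, Finset.sum_add_distrib, hinput, add_zero]
    _ = ∑ i, (ξ i • (A i *ᵥ y i) + (s * ξ i) • (K i *ᵥ y i)) := by
        rw [sum_smul_sum_smul_eq_of_vecMul_eq_smul hξ, Finset.smul_sum, Finset.sum_add_distrib]
        simp only [smul_smul]
    _ = M *ᵥ ∑ i, ξ i • y i := by
        simp only [hlocal, mulVec_sum, mulVec_smul]

end LeftEigenvector

theorem stmt7_general (N n m p : ℕ)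
    (A : Fin N → Matrix (Fin n) (Fin n) ℝ)
    (B : Fin N → Matrix (Fin n) (Fin p) ℝ)
    (C : Fin N → Matrix (Fin m) (Fin n) ℝ)
    (H : Matrix (Fin n) (Fin m) ℝ)
    (W : Matrix (Fin N) (Fin N) ℝ)
    (δ : Fin N → ℝ)
    -- ξ is a left eigenvector of W associated with eigenvalue s₀
    (s₀ : ℂ) (ξ : Fin N → ℂ)
    (hξ : ξ ᵥ* (W.map Complex.ofReal) = s₀ • ξ)
    -- ξᵀ Δ = 0
    (hξΔ : ∀ i : Fin N, ξ i * (δ i : ℂ) = 0)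
    -- the matrices Aᵢ + s₀·H·Cᵢ all equal M
    (M : Matrix (Fin n) (Fin n) ℂ)
    (hM : ∀ i : Fin N,
      (A i).map Complex.ofReal
        + s₀ • ((H.map Complex.ofReal) * (C i).map Complex.ofReal) = M)
    -- x, u solve the network dynamics
    (x : Fin N → ℝ → (Fin n → ℂ))
    (u : Fin N → ℝ → (Fin p → ℝ))
    (hx : ∀ (i : Fin N) (t : ℝ),
      HasDerivAt (x i)
        (((A i).map Complex.ofReal).mulVec (x i t)
          + ∑ j : Fin N, ((W i j : ℝ) : ℂ) •
              (((H.map Complex.ofReal) * (C j).map Complex.ofReal).mulVec (x j t))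
          + ((δ i : ℝ) : ℂ) •
              (((B i).map Complex.ofReal).mulVec (fun l => ((u i t l : ℝ) : ℂ)))) t) :
    ∀ t : ℝ,
      HasDerivAt (fun τ => ∑ i : Fin N, ξ i • x i τ)
        (M.mulVec (∑ i : Fin N, ξ i • x i t)) t := by
  intro t
  have hz := HasDerivAt.fun_sum (u := Finset.univ) fun i _ => (hx i t).const_smul (ξ i)
  exact hz.congr_deriv (sum_smul_network_eq_mulVec_sum_smul hξ hξΔ hM _ _)

/-- key step of Theorem 4: if `ξ` is a left eigenvector of `W` for `s₀`
with `ξᵀΔ = 0`, and `Aᵢ + s₀·H·Cᵢ = M` for every `i`, then along any solution of the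
network dynamics `ẋᵢ = Aᵢxᵢ + ∑ⱼ ω_{ij}·H·Cⱼxⱼ + δᵢBᵢuᵢ`, the function
`z(t) = ∑ᵢ ξᵢ xᵢ(t)` satisfies `ż = M z`. -/
theorem stmt7 (N n m p : ℕ) (hN : 1 ≤ N)
    (A : Fin N → Matrix (Fin n) (Fin n) ℝ)
    (B : Fin N → Matrix (Fin n) (Fin p) ℝ)
    (C : Fin N → Matrix (Fin m) (Fin n) ℝ)
    (H : Matrix (Fin n) (Fin m) ℝ)
    (W : Matrix (Fin N) (Fin N) ℝ) (hW : ∀ i, W i i = 0)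
    (δ : Fin N → ℝ) (hδ : ∀ i, δ i = 0 ∨ δ i = 1)
    -- ξ is a left eigenvector of W associated with eigenvalue s₀
    (s₀ : ℂ) (ξ : Fin N → ℂ)
    (hξ : ξ ᵥ* (W.map Complex.ofReal) = s₀ • ξ)
    -- ξᵀ Δ = 0
    (hξΔ : ∀ i : Fin N, ξ i * (δ i : ℂ) = 0)
    -- the matrices Aᵢ + s₀·H·Cᵢ all equal M
    (M : Matrix (Fin n) (Fin n) ℂ)
    (hM : ∀ i : Fin N,
      (A i).map Complex.ofReal
        + s₀ • ((H.map Complex.ofReal) * (C i).map Complex.ofReal) = M)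
    -- x, u solve the network dynamics
    (x : Fin N → ℝ → (Fin n → ℂ))
    (u : Fin N → ℝ → (Fin p → ℝ))
    (hx : ∀ (i : Fin N) (t : ℝ),
      HasDerivAt (x i)
        (((A i).map Complex.ofReal).mulVec (x i t)
          + ∑ j : Fin N, ((W i j : ℝ) : ℂ) •
              (((H.map Complex.ofReal) * (C j).map Complex.ofReal).mulVec (x j t))
          + ((δ i : ℝ) : ℂ) •
              (((B i).map Complex.ofReal).mulVec (fun l => ((u i t l : ℝ) : ℂ)))) t) :
    ∀ t : ℝ,
      HasDerivAt (fun τ => ∑ i : Fin N, ξ i • x i τ)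
        (M.mulVec (∑ i : Fin N, ξ i • x i t)) t :=
  stmt7_general N n m p A B C H W δ s₀ ξ hξ hξΔ M hM x u hx
end

section
/- In the homogeneous networked system, if there exists at least one node i with δ_i = 0 (a node without external control input) and the pair (Φ, Ψ) is controllable, then the pair (A, H·C) is controllable. -/
open Matrix Finset Kronecker

/-!
If `(A, G)` fails the PBH test, there is a nonzero `v` with `v A = s v` and `v G = 0`. For any
nonzero `u` with `u D = 0` (the indicator of a node without control input), the pure tensor
`u ⊗ v` then satisfies `(u ⊗ v)(I ⊗ A + W ⊗ G) = s (u ⊗ v)` and `(u ⊗ v)(D ⊗ B) = 0`, so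
`(I ⊗ A + W ⊗ G, D ⊗ B)` fails the PBH test at the same `s`, whatever the coupling `W`.
-/

namespace Matrix

theorem rank_eq_card_iff_linearIndependent_row {K m n : Type*} [Field K] [Fintype m] [Fintype n]
    (M : Matrix m n K) : M.rank = Fintype.card m ↔ LinearIndependent K M.row := by
  rw [M.rank_eq_finrank_span_row, linearIndependent_iff_card_eq_finrank_span, Set.finrank,
    eq_comm]

theorem rank_eq_card_iff_vecMul_eq_zero {K m n : Type*} [Field K] [Fintype m] [Fintype n]
    (M : Matrix m n K) : M.rank = Fintype.card m ↔ ∀ v : m → K, v ᵥ* M = 0 → v = 0 := by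
  rw [rank_eq_card_iff_linearIndependent_row, ← vecMul_injective_iff, ← coe_vecMulLinear,
    injective_iff_map_eq_zero]
  rfl

theorem vecMul_kronecker_tmul {R a b a' b' : Type*} [CommSemiring R] [Fintype a] [Fintype b]
    (u : a → R) (v : b → R) (M : Matrix a a' R) (M' : Matrix b b' R) :
    (fun x : a × b => u x.1 * v x.2) ᵥ* (M ⊗ₖ M')
      = fun y : a' × b' => (u ᵥ* M) y.1 * (v ᵥ* M') y.2 := by
  funext ⟨i, j⟩
  simp only [vecMul, dotProduct, kroneckerMap_apply, ← univ_product_univ, sum_product,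
    sum_mul_sum]
  exact sum_congr rfl fun k _ => sum_congr rfl fun l _ => by ring

end Matrix

theorem isControllable_iff_forall_left_eigenvector {q r : Type*} [Fintype q] [Fintype r]
    [DecidableEq q] (M : Matrix q q ℂ) (B : Matrix q r ℂ) :
    IsControllable M B ↔ ∀ (s : ℂ) (v : q → ℂ), v ᵥ* M = s • v → v ᵥ* B = 0 → v = 0 := by
  refine forall_congr' fun s => ?_
  rw [rank_eq_card_iff_vecMul_eq_zero]
  refine forall_congr' fun v => ?_
  rw [vecMul_fromCols, ← Sum.elim_zero_zero, Sum.elim_eq_iff, vecMul_sub, vecMul_smul,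
    vecMul_one, sub_eq_zero, eq_comm, and_imp]

theorem IsControllable.of_kronecker {ι ι' q r : Type*} [Fintype ι] [Fintype ι'] [DecidableEq ι]
    [Fintype q] [Fintype r] [DecidableEq q]
    {A G : Matrix q q ℂ} {W : Matrix ι ι ℂ} {D : Matrix ι ι' ℂ}
    {B : Matrix q r ℂ} {u : ι → ℂ} (hu : u ≠ 0) (huD : u ᵥ* D = 0)
    (h : IsControllable ((1 : Matrix ι ι ℂ) ⊗ₖ A + W ⊗ₖ G) (D ⊗ₖ B)) :
    IsControllable A G := by
  rw [isControllable_iff_forall_left_eigenvector] at h ⊢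
  intro s v hvA hvG
  have huv : (fun x : ι × q => u x.1 * v x.2) = 0 := by
    refine h s _ ?_ ?_
    · rw [vecMul_add, vecMul_kronecker_tmul, vecMul_kronecker_tmul, vecMul_one, hvA, hvG]
      funext x
      simp only [Pi.smul_apply, Pi.add_apply, Pi.zero_apply, smul_eq_mul]
      ring
    · rw [vecMul_kronecker_tmul, huD]
      funext x
      simp
  obtain ⟨i, hi⟩ := Function.ne_iff.mp hu
  funext k
  exact (mul_eq_zero.mp (congr_fun huv (i, k))).resolve_left hi

theorem stmt8_general (N n m p : ℕ)
    (A : Matrix (Fin n) (Fin n) ℝ)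
    (B : Matrix (Fin n) (Fin p) ℝ)
    (C : Matrix (Fin m) (Fin n) ℝ)
    (H : Matrix (Fin n) (Fin m) ℝ)
    (W : Matrix (Fin N) (Fin N) ℝ)
    (δ : Fin N → ℝ)
    -- some node has no external control input
    (hfree : ∃ i : Fin N, δ i = 0)
    -- Φ = I_N ⊗ A + W ⊗ (H·C) and Ψ = Δ ⊗ B are controllable
    (hctrb : IsControllable
      ((1 : Matrix (Fin N) (Fin N) ℂ) ⊗ₖ (A.map Complex.ofReal)
        + (W.map Complex.ofReal) ⊗ₖ ((H.map Complex.ofReal) * (C.map Complex.ofReal)))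
      (((Matrix.diagonal δ).map Complex.ofReal) ⊗ₖ (B.map Complex.ofReal))) :
    IsControllable (A.map Complex.ofReal)
      ((H.map Complex.ofReal) * (C.map Complex.ofReal)) := by
  obtain ⟨i, hi⟩ := hfree
  refine hctrb.of_kronecker (u := Pi.single i 1) (Pi.single_ne_zero_iff.2 one_ne_zero) ?_
  rw [diagonal_map Complex.ofReal_zero, single_vecMul_diagonal, hi, Complex.ofReal_zero,
    mul_zero, Pi.single_zero]

/-- Lemma 1: in the homogeneous networked system with
`Φ = I_N ⊗ A + W ⊗ (H·C)` and `Ψ = Δ ⊗ B`, if some node has no external control input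
and `(Φ, Ψ)` is controllable, then `(A, H·C)` is controllable. -/
theorem stmt8 (N n m p : ℕ) (hN : 1 ≤ N)
    (A : Matrix (Fin n) (Fin n) ℝ)
    (B : Matrix (Fin n) (Fin p) ℝ)
    (C : Matrix (Fin m) (Fin n) ℝ)
    (H : Matrix (Fin n) (Fin m) ℝ)
    (W : Matrix (Fin N) (Fin N) ℝ)
    (δ : Fin N → ℝ) (hδ : ∀ i, δ i = 0 ∨ δ i = 1)
    -- some node has no external control input
    (hfree : ∃ i : Fin N, δ i = 0)
    -- Φ = I_N ⊗ A + W ⊗ (H·C) and Ψ = Δ ⊗ B are controllable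
    (hctrb : IsControllable
      ((1 : Matrix (Fin N) (Fin N) ℂ) ⊗ₖ (A.map Complex.ofReal)
        + (W.map Complex.ofReal) ⊗ₖ ((H.map Complex.ofReal) * (C.map Complex.ofReal)))
      (((Matrix.diagonal δ).map Complex.ofReal) ⊗ₖ (B.map Complex.ofReal))) :
    IsControllable (A.map Complex.ofReal)
      ((H.map Complex.ofReal) * (C.map Complex.ofReal)) :=
  stmt8_general N n m p A B C H W δ hfree hctrb
end
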